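/- arXiv:1205.1185 — 3 statements merged into one kernel-verified Lean document; each statement's English description precedes it below -/
import Mathlib

section
/- Let c, d ∈ ℝ with d < 0 and c + d < 0. Then there exists a constant A > 0 (depending only on c and d) such that for every real B > 1, the sum ∑_{j=1}^{∞} 2^{cj}·min(1, B·2^{dj}) converges and satisfies ∑_{j=1}^{∞} 2^{cj}·min(1, B·2^{dj}) ≤ A·(1 + (log B)·B^{−c/d}). (Lemma 5.1(1).) -/
/-!
Write `a = 2^c`, `b = 2^d` and `n = j + 1`, so the terms are `a^n min(1, B b^n)`, with `b < 1`
and `ab < 1`. If `c < 0` they are bounded by `a^n`, a convergent geometric series. If `c ≥ 0`, cut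
the series at `J = ⌈log₂ B / (-d)⌉`, so that `B b^J ≤ 1`: each of the first `J` terms
is at most `a^J`, and beyond `J` the terms are at most `B (ab)^n`, a geometric tail of size
`O(B b^J a^J) = O(a^J)`. Since `a^J ≈ 2^(c log₂ B / (-d)) = B^(-c/d)`, the whole sum is
`O((1 + log B) B^(-c/d))`.
-/

open Real

lemma rpow_mul_natCast_add_one {x : ℝ} (hx : 0 ≤ x) (y : ℝ) (n : ℕ) :
    x ^ (y * ((n : ℝ) + 1)) = (x ^ y) ^ (n + 1) := by
  exact_mod_cast rpow_mul_natCast hx y (n + 1)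

section PowMulMin

variable {a b B : ℝ}

lemma pow_succ_mul_min_nonneg (ha : 0 ≤ a) (hb : 0 ≤ b) (hB : 0 ≤ B) (n : ℕ) :
    0 ≤ a ^ (n + 1) * min 1 (B * b ^ (n + 1)) := by
  positivity

lemma pow_succ_mul_min_le_pow (ha : 0 ≤ a) (n : ℕ) :
    a ^ (n + 1) * min 1 (B * b ^ (n + 1)) ≤ a ^ (n + 1) :=
  mul_le_of_le_one_right (pow_nonneg ha _) (min_le_left _ _)

lemma pow_succ_mul_min_le_mul_pow (ha : 0 ≤ a) (n : ℕ) :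
    a ^ (n + 1) * min 1 (B * b ^ (n + 1)) ≤ B * (a * b) ^ (n + 1) := by
  rw [mul_pow, mul_left_comm]
  exact mul_le_mul_of_nonneg_left (min_le_right _ _) (pow_nonneg ha _)

lemma summable_pow_succ_mul_min (ha : 0 ≤ a) (hb : 0 ≤ b) (hab : a * b < 1) (hB : 0 ≤ B) :
    Summable fun n : ℕ => a ^ (n + 1) * min 1 (B * b ^ (n + 1)) :=
  .of_nonneg_of_le (pow_succ_mul_min_nonneg ha hb hB) (pow_succ_mul_min_le_mul_pow ha)
    (((summable_nat_add_iff 1).mpr (summable_geometric_of_lt_one (by positivity) hab)).mul_left B)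

lemma tsum_pow_succ_mul_min_le_of_lt_one (ha : 0 ≤ a) (ha1 : a < 1) (hb : 0 ≤ b) (hB : 0 ≤ B) :
    ∑' n : ℕ, a ^ (n + 1) * min 1 (B * b ^ (n + 1)) ≤ a / (1 - a) := by
  have hgeom := (hasSum_geometric_of_lt_one ha ha1).mul_left a
  simp_rw [← pow_succ'] at hgeom
  rw [div_eq_mul_inv, ← hgeom.tsum_eq]
  exact Summable.tsum_le_tsum (pow_succ_mul_min_le_pow ha)
    (.of_nonneg_of_le (pow_succ_mul_min_nonneg ha hb hB) (pow_succ_mul_min_le_pow ha)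
      hgeom.summable) hgeom.summable

lemma tsum_pow_succ_mul_min_le (ha : 1 ≤ a) (hb : 0 ≤ b) (hab : a * b < 1) (hB : 0 ≤ B)
    {J : ℕ} (hJ : B * b ^ J ≤ 1) :
    ∑' n : ℕ, a ^ (n + 1) * min 1 (B * b ^ (n + 1)) ≤ a ^ J * (J + (1 - a * b)⁻¹) := by
  have ha0 : 0 ≤ a := zero_le_one.trans ha
  have hab0 : 0 ≤ a * b := by positivity
  have hsum := summable_pow_succ_mul_min ha0 hb hab hB
  rw [← hsum.sum_add_tsum_nat_add J, mul_add]
  gcongr ?_ + ?_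
  · calc ∑ n ∈ Finset.range J, a ^ (n + 1) * min 1 (B * b ^ (n + 1))
        ≤ ∑ _n ∈ Finset.range J, a ^ J := Finset.sum_le_sum fun n hn =>
          (pow_succ_mul_min_le_pow ha0 n).trans (pow_le_pow_right₀ ha (Finset.mem_range.mp hn))
      _ = a ^ J * J := by simp [mul_comm]
  · have htail (n : ℕ) : a ^ (n + J + 1) * min 1 (B * b ^ (n + J + 1)) ≤ a ^ J * (a * b) ^ n :=
      calc a ^ (n + J + 1) * min 1 (B * b ^ (n + J + 1))
          ≤ B * (a * b) ^ (n + J + 1) := pow_succ_mul_min_le_mul_pow ha0 _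
        _ ≤ B * (a * b) ^ (n + J) :=
          mul_le_mul_of_nonneg_left (pow_le_pow_of_le_one hab0 hab.le (by omega)) hB
        _ = (B * b ^ J) * (a ^ J * (a * b) ^ n) := by ring
        _ ≤ a ^ J * (a * b) ^ n := mul_le_of_le_one_left (by positivity) hJ
    calc ∑' n : ℕ, a ^ (n + J + 1) * min 1 (B * b ^ (n + J + 1))
        ≤ ∑' n : ℕ, a ^ J * (a * b) ^ n :=
          Summable.tsum_le_tsum htail ((summable_nat_add_iff J).mpr hsum)
            ((summable_geometric_of_lt_one hab0 hab).mul_left _)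
      _ = a ^ J * (1 - a * b)⁻¹ := by rw [tsum_mul_left, tsum_geometric_of_lt_one hab0 hab]

end PowMulMin

lemma exists_nat_mul_two_rpow_pow_le_one {c d B : ℝ} (hc : 0 ≤ c) (hd : d < 0) (hB : 1 ≤ B) :
    ∃ J : ℕ, B * (2 ^ d) ^ J ≤ 1 ∧ (J : ℝ) ≤ logb 2 B / -d + 1 ∧
      (2 ^ c) ^ J ≤ 2 ^ c * B ^ (-c / d) := by
  set t := logb 2 B / -d
  have ht : 0 ≤ t := div_nonneg (logb_nonneg one_lt_two hB) (by linarith)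
  have hJt : (⌈t⌉₊ : ℝ) ≤ t + 1 := (Nat.ceil_lt_add_one ht).le
  refine ⟨⌈t⌉₊, ?_, hJt, ?_⟩
  · rw [← rpow_mul_natCast zero_le_two]
    calc B * 2 ^ (d * ⌈t⌉₊) ≤ B * 2 ^ (d * t) := by
          gcongr B * ?_
          exact rpow_le_rpow_of_exponent_le one_le_two
            (mul_le_mul_of_nonpos_left (Nat.le_ceil t) hd.le)
      _ = B * 2 ^ (-logb 2 B) := by
        congr 2
        show d * (logb 2 B / -d) = -logb 2 B
        field_simp [hd.ne]
      _ = 1 := by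
        rw [rpow_neg zero_le_two, rpow_logb two_pos (by norm_num) (by linarith),
          mul_inv_cancel₀ (by positivity)]
  · rw [← rpow_mul_natCast zero_le_two]
    calc (2 : ℝ) ^ (c * ⌈t⌉₊) ≤ 2 ^ (c * (t + 1)) := by gcongr; exact one_le_two
      _ = 2 ^ c * (2 ^ logb 2 B) ^ (-c / d) := by
        rw [← rpow_mul zero_le_two, ← rpow_add two_pos]
        congr 1
        field_simp [t]
        ring
      _ = 2 ^ c * B ^ (-c / d) := by rw [rpow_logb two_pos (by norm_num) (by linarith)]

lemma rpow_le_exp_mul_one_add_log_mul_rpow {B e : ℝ} (hB : 1 ≤ B) (he : 0 ≤ e) :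
    B ^ e ≤ exp e * (1 + log B * B ^ e) := by
  have hlog : 0 ≤ log B := log_nonneg hB
  have hBe : 0 ≤ log B * B ^ e := by positivity
  rcases le_total (log B) 1 with h | h
  · calc B ^ e = exp (log B * e) := rpow_def_of_pos (by linarith) e
      _ ≤ exp e := exp_le_exp.mpr (mul_le_of_le_one_left he h)
      _ ≤ exp e * (1 + log B * B ^ e) := le_mul_of_one_le_right (exp_pos e).le (by linarith)
  · calc B ^ e ≤ log B * B ^ e := le_mul_of_one_le_left (by positivity) h
      _ ≤ 1 * (1 + log B * B ^ e) := by linarith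
      _ ≤ exp e * (1 + log B * B ^ e) := by gcongr; exact one_le_exp he

lemma rpow_mul_le_mul_one_add_log_mul_rpow {B e α β : ℝ} (hB : 1 ≤ B) (he : 0 ≤ e)
    (hα : 0 ≤ α) (hβ : 0 ≤ β) :
    B ^ e * (α * log B + β) ≤ (α + β * exp e) * (1 + log B * B ^ e) := by
  have h := rpow_le_exp_mul_one_add_log_mul_rpow hB he
  have hBe : 0 ≤ log B * B ^ e := mul_nonneg (log_nonneg hB) (by positivity)
  nlinarith [mul_le_mul_of_nonneg_left h hβ]

lemma tsum_two_rpow_pow_mul_min_le {c d B : ℝ} (hc : 0 ≤ c) (hd : d < 0)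
    (hab : (2 : ℝ) ^ c * 2 ^ d < 1) (hB : 1 ≤ B) :
    ∑' n : ℕ, ((2 : ℝ) ^ c) ^ (n + 1) * min 1 (B * ((2 : ℝ) ^ d) ^ (n + 1)) ≤
      2 ^ c * ((-d * log 2)⁻¹ + (1 + (1 - 2 ^ c * 2 ^ d)⁻¹) * exp (-c / d)) *
        (1 + log B * B ^ (-c / d)) := by
  set K := (1 - (2 : ℝ) ^ c * 2 ^ d)⁻¹
  have hK : 0 < K := inv_pos.mpr (by linarith)
  have hd2 : 0 < -d * log 2 := mul_pos (by linarith) (log_pos one_lt_two)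
  obtain ⟨J, hBJ, hJ, haJ⟩ := exists_nat_mul_two_rpow_pow_le_one hc hd hB
  calc _ ≤ (2 ^ c) ^ J * (J + K) :=
        tsum_pow_succ_mul_min_le (one_le_rpow one_le_two hc) (by positivity) hab (by linarith) hBJ
    _ ≤ 2 ^ c * B ^ (-c / d) * (logb 2 B / -d + 1 + K) := by gcongr
    _ = 2 ^ c * (B ^ (-c / d) * ((-d * log 2)⁻¹ * log B + (1 + K))) := by
      rw [← log_div_log]; field_simp; ring
    _ ≤ 2 ^ c * (((-d * log 2)⁻¹ + (1 + K) * exp (-c / d)) * (1 + log B * B ^ (-c / d))) :=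
      mul_le_mul_of_nonneg_left (rpow_mul_le_mul_one_add_log_mul_rpow hB
        (div_nonneg_of_nonpos (by linarith) hd.le) (inv_pos.mpr hd2).le (add_pos one_pos hK).le)
        (by positivity)
    _ = _ := by ring

/-- Lemma 5.1(1): if `d < 0` and `c + d < 0`, then there is `A > 0` such that for all
`B > 1`, `∑_{j=1}^∞ 2^{cj} min(1, B·2^{dj}) ≤ A(1 + (log B)·B^{−c/d})`. -/
theorem sum_min_bound_of_neg (c d : ℝ) (hd : d < 0) (hcd : c + d < 0) :
    ∃ A : ℝ, 0 < A ∧ ∀ B : ℝ, 1 < B →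
      Summable (fun j : ℕ =>
        (2 : ℝ) ^ (c * ((j : ℝ) + 1)) * min 1 (B * (2 : ℝ) ^ (d * ((j : ℝ) + 1)))) ∧
      (∑' j : ℕ, (2 : ℝ) ^ (c * ((j : ℝ) + 1)) * min 1 (B * (2 : ℝ) ^ (d * ((j : ℝ) + 1)))) ≤
        A * (1 + Real.log B * B ^ (-c / d)) := by
  simp_rw [rpow_mul_natCast_add_one zero_le_two]
  have ha : 0 < (2 : ℝ) ^ c := by positivity
  have hb : 0 < (2 : ℝ) ^ d := by positivity
  have hab : (2 : ℝ) ^ c * 2 ^ d < 1 := by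
    rw [← rpow_add two_pos]; exact rpow_lt_one_of_one_lt_of_neg one_lt_two hcd
  rcases lt_or_ge c 0 with hc | hc
  · have ha1 : (2 : ℝ) ^ c < 1 := rpow_lt_one_of_one_lt_of_neg one_lt_two hc
    have hA : (0 : ℝ) < 2 ^ c / (1 - 2 ^ c) := div_pos ha (by linarith)
    refine ⟨_, hA, fun B hB => ⟨summable_pow_succ_mul_min ha.le hb.le hab (by linarith), ?_⟩⟩
    have hlog : 0 ≤ log B * B ^ (-c / d) := mul_nonneg (log_nonneg hB.le) (by positivity)
    calc _ ≤ 2 ^ c / (1 - 2 ^ c) :=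
          tsum_pow_succ_mul_min_le_of_lt_one ha.le ha1 hb.le (by linarith)
      _ ≤ _ := le_mul_of_one_le_right hA.le (by linarith)
  · have hd2 : 0 < -d * log 2 := mul_pos (by linarith) (log_pos one_lt_two)
    have hK : 0 < (1 - (2 : ℝ) ^ c * 2 ^ d)⁻¹ := inv_pos.mpr (by linarith)
    refine ⟨2 ^ c * ((-d * log 2)⁻¹ + (1 + (1 - 2 ^ c * 2 ^ d)⁻¹) * exp (-c / d)),
      by positivity, fun B hB => ⟨summable_pow_succ_mul_min ha.le hb.le hab (by linarith),
        tsum_two_rpow_pow_mul_min_le hc hd hab hB.le⟩⟩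
end

section
/- Let n ≥ 1 be an integer, a ∈ ℝ, x ∈ ℝ^{2n} and t ∈ ℝ. Let J be the 2n×2n real matrix [[0, Iₙ],[−Iₙ, 0]], B = |x|²·I_{2n} + a·t·J, and K = x·xᵀ (the rank-one matrix with entries x_i x_j). Then det(B + 2K) = (|x|⁴ + a²t²)^{n−1}·(3|x|⁴ + a²t²). (Equation (3.12) in the proof of Lemma 3.5.) -/
noncomputable section

/-- The standard symplectic matrix `J = [[0, Iₙ], [−Iₙ, 0]]` as a `2n × 2n` real matrix,
indexed by `Fin n ⊕ Fin n`. -/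
def Jmat (n : ℕ) : Matrix (Fin n ⊕ Fin n) (Fin n ⊕ Fin n) ℝ :=
  Matrix.fromBlocks 0 1 (-1) 0

/-!
`B = s • 1 + c • J` (with `s = |x|²`, `c = a t`) is, after interleaving the two blocks, `n` copies
of the rotation-like block `!![s, c; -c, s]`, so `det B = (s² + c²)ⁿ`; and since `J² = -1`,
`B⁻¹ = (s • 1 - c • J) / (s² + c²)`. As `J` is skew, `xᵀ J x = 0`, so the matrix determinant lemma
gives `det (B + 2 x xᵀ) = det B · (1 + 2 s² / (s² + c²))`.
-/

open Matrix
open scoped Kronecker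

theorem Matrix.det_add_vecMulVec {R m : Type*} [CommRing R] [Fintype m] [DecidableEq m]
    {A : Matrix m m R} (hA : IsUnit A.det) (u v : m → R) :
    (A + vecMulVec u v).det = A.det * (1 + v ⬝ᵥ A⁻¹ *ᵥ u) := by
  rw [vecMulVec_eq Unit, det_add_replicateCol_mul_replicateRow hA, ← replicateRow_vecMul,
    det_unique (1 + _ : Matrix Unit Unit R), add_apply, one_apply_eq,
    replicateRow_mul_replicateCol_apply, dotProduct_mulVec]

lemma Jmat_mul_self (n : ℕ) : Jmat n * Jmat n = -1 := by
  rw [Jmat, fromBlocks_multiply, ← fromBlocks_one, fromBlocks_neg]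
  simp

lemma dotProduct_Jmat_mulVec_self (n : ℕ) (x : Fin n ⊕ Fin n → ℝ) : x ⬝ᵥ Jmat n *ᵥ x = 0 := by
  simp [Jmat, fromBlocks_mulVec, dotProduct, Fintype.sum_sum_type, neg_mulVec, mul_comm]

lemma det_smul_one_add_smul_Jmat (n : ℕ) (s c : ℝ) :
    (s • 1 + c • Jmat n).det = (s ^ 2 + c ^ 2) ^ n := by
  let e : Fin 2 × Fin n ≃ Fin n ⊕ Fin n :=
    (finTwoEquiv.prodCongr (Equiv.refl _)).trans (Equiv.boolProdEquivSum _)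
  have hblocks : (s • 1 + c • Jmat n).submatrix e e = !![s, c; -c, s] ⊗ₖ 1 := by
    ext ⟨i, k⟩ ⟨j, l⟩
    fin_cases i <;> fin_cases j <;> by_cases h : k = l <;>
      simp [e, Jmat, Equiv.boolProdEquivSum, finTwoEquiv, one_apply, h]
  rw [← det_submatrix_equiv_self e, hblocks, det_kronecker, det_fin_two_of, det_one, one_pow,
    mul_one, Fintype.card_fin]
  ring

lemma smul_one_add_smul_Jmat_mul_sub (n : ℕ) (s c : ℝ) :
    (s • 1 + c • Jmat n) * (s • 1 - c • Jmat n) = (s ^ 2 + c ^ 2) • 1 := by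
  simp only [Matrix.add_mul, Matrix.mul_sub, Matrix.smul_mul, Matrix.mul_smul, Matrix.one_mul,
    Matrix.mul_one, Jmat_mul_self, smul_neg]
  module

lemma inv_smul_one_add_smul_Jmat (n : ℕ) {s c : ℝ} (h : s ^ 2 + c ^ 2 ≠ 0) :
    (s • 1 + c • Jmat n)⁻¹ = (s ^ 2 + c ^ 2)⁻¹ • (s • 1 - c • Jmat n) := by
  apply inv_eq_right_inv
  rw [Matrix.mul_smul, smul_one_add_smul_Jmat_mul_sub, smul_smul, inv_mul_cancel₀ h, one_smul]

/-- Equation (3.12): with `B = |x|²·I + a·t·J` and `K = x·xᵀ`,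
`det(B + 2K) = (|x|⁴ + a²t²)^{n−1}·(3|x|⁴ + a²t²)`. -/
theorem det_B_add_two_K (n : ℕ) (hn : 1 ≤ n) (a t : ℝ) (x : Fin n ⊕ Fin n → ℝ) :
    ((∑ i, x i ^ 2) • (1 : Matrix (Fin n ⊕ Fin n) (Fin n ⊕ Fin n) ℝ)
        + (a * t) • Jmat n + (2 : ℝ) • Matrix.vecMulVec x x).det
      = ((∑ i, x i ^ 2) ^ 2 + a ^ 2 * t ^ 2) ^ (n - 1)
          * (3 * (∑ i, x i ^ 2) ^ 2 + a ^ 2 * t ^ 2) := by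
  obtain ⟨k, rfl⟩ : ∃ k, n = k + 1 := ⟨n - 1, by omega⟩
  have hsum : ∑ i, x i ^ 2 = x ⬝ᵥ x := by simp only [dotProduct, sq]
  rw [hsum, Nat.add_sub_cancel, ← smul_vecMulVec]
  by_cases hx : x = 0
  · subst hx
    rw [dotProduct_zero, vecMulVec_zero, add_zero, det_smul_one_add_smul_Jmat]
    ring
  set s := x ⬝ᵥ x with hs_def
  have hd : s ^ 2 + (a * t) ^ 2 ≠ 0 := by
    have hs : s ≠ 0 := mt dotProduct_self_eq_zero.1 hx
    positivity
  have hB : IsUnit ((s • 1 + (a * t) • Jmat (k + 1)).det) := by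
    rw [det_smul_one_add_smul_Jmat]
    exact (pow_ne_zero _ hd).isUnit
  rw [det_add_vecMulVec hB, det_smul_one_add_smul_Jmat, inv_smul_one_add_smul_Jmat _ hd]
  simp only [smul_mulVec, sub_mulVec, one_mulVec, dotProduct_smul, dotProduct_sub,
    mulVec_smul, dotProduct_Jmat_mulVec_self, smul_eq_mul, ← hs_def, mul_pow]
  rw [mul_pow] at hd
  field_simp
  ring
end
end

section
/- Let m ≥ 1 be an integer, a ∈ ℝ with a ≠ 0, and β ∈ ℝ with β ∈ (−1,0) ∪ (0,∞). Define f(x,t) = 2(β+1)|x|⁸ + (3(β+2) − 2a²)|x|⁴t² + (β+2)a²t⁴ for x ∈ ℝ^{m}, t ∈ ℝ, and C_β = ((β+2)/2)·(2β+5+√((2β+5)²−9)). Then: (i) if a² < C_β, then f(x,t) > 0 for all (x,t) ≠ (0,0); (ii) if a² = C_β, then there exist constants γ > 0 and c > 0 such that f(x,t) = γ·(|x|⁴ − c·t²)² for all (x,t); (iii) if a² > C_β, then there exist constants γ > 0 and c₁, c₂ > 0 with c₁ ≠ c₂ such that f(x,t) = γ·(|x|⁴ − c₁·t²)·(|x|⁴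 − c₂·t²) for all (x,t). (Lemma 3.6, Case 1.) -/
/-!
With `u = |x|⁴ ≥ 0` and `s = t² ≥ 0`, `f` is the binary quadratic form
`2(β+1) u² + (3(β+2) − 2a²) u s + (β+2) a² s²`. As a polynomial in `a²` its discriminant is
`4 (a² − C_β)(a² − C'_β)`, where `C'_β = ((β+2)/2)(2β+5−√((2β+5)²−9))` is the conjugate root.
Below `C_β` the form is positive on the quadrant: either its middle coefficient is nonnegative,
or `a² > 3(β+2)/2 > C'_β` and the discriminant is negative. At `a² = C_β` the discriminant
vanishes and the form is a square; above `C_β` it is positive and the form splits into two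
distinct real factors. For `a² ≥ C_β` the middle coefficient is negative while the outer ones
are positive, so the constants `c` of the factors `u − c s` are positive.
-/

noncomputable section

/-- The quartic form `f(x,t) = 2(β+1)|x|⁸ + (3(β+2) − 2a²)|x|⁴t² + (β+2)a²t⁴`,
where `|x|² = ∑ᵢ xᵢ²` is the square of the Euclidean norm of `x ∈ ℝᵐ`. -/
def fQuartic (m : ℕ) (a β : ℝ) (x : Fin m → ℝ) (t : ℝ) : ℝ :=
  2 * (β + 1) * (∑ i, x i ^ 2) ^ 4
    + (3 * (β + 2) - 2 * a ^ 2) * (∑ i, x i ^ 2) ^ 2 * t ^ 2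
    + (β + 2) * a ^ 2 * t ^ 4

/-- The constant `C_β = ((β+2)/2)(2β+5+√((2β+5)²−9))`. -/
def Cbeta (β : ℝ) : ℝ := ((β + 2) / 2) * (2 * β + 5 + Real.sqrt ((2 * β + 5) ^ 2 - 9))

section QuadraticForm

variable {A B C : ℝ}

theorem quadratic_form_pos_of_coeff_nonneg (hA : 0 < A) (hB : 0 ≤ B) (hC : 0 < C) {u s : ℝ}
    (hu : 0 ≤ u) (hs : 0 ≤ s) (h : u ≠ 0 ∨ s ≠ 0) : 0 < A * u ^ 2 + B * u * s + C * s ^ 2 := by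
  have hBus : 0 ≤ B * u * s := by positivity
  rcases h with hu0 | hs0
  · nlinarith [pow_pos (lt_of_le_of_ne hu (Ne.symm hu0)) 2, sq_nonneg s]
  · nlinarith [pow_pos (lt_of_le_of_ne hs (Ne.symm hs0)) 2, sq_nonneg u]

theorem quadratic_form_pos_of_discrim_neg (hA : 0 < A) (hd : discrim A B C < 0) {u s : ℝ}
    (h : u ≠ 0 ∨ s ≠ 0) : 0 < A * u ^ 2 + B * u * s + C * s ^ 2 := by
  have key : 4 * A * (A * u ^ 2 + B * u * s + C * s ^ 2)
      = (2 * A * u + B * s) ^ 2 - discrim A B C * s ^ 2 := by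
    rw [discrim]; ring
  rcases eq_or_ne s 0 with rfl | hs
  · have hu : u ≠ 0 := by tauto
    simpa using mul_pos hA (by positivity : 0 < u ^ 2)
  · have hs2 : 0 < s ^ 2 := by positivity
    have : 0 < 4 * A * (A * u ^ 2 + B * u * s + C * s ^ 2) := by
      rw [key]; nlinarith [sq_nonneg (2 * A * u + B * s)]
    exact pos_of_mul_pos_right this (by positivity)

theorem quadratic_form_eq_mul_of_discrim_eq_sq (hA : A ≠ 0) {δ : ℝ}
    (hδ : discrim A B C = δ * δ) (u s : ℝ) :
    A * u ^ 2 + B * u * s + C * s ^ 2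
      = A * (u - (-B + δ) / (2 * A) * s) * (u - (-B - δ) / (2 * A) * s) := by
  rw [discrim] at hδ
  field_simp
  linear_combination (-(s ^ 2)) * hδ

theorem exists_quadratic_form_eq_sq (hA : 0 < A) (hB : B < 0) (hd : discrim A B C = 0) :
    ∃ c, 0 < c ∧ ∀ u s : ℝ, A * u ^ 2 + B * u * s + C * s ^ 2 = A * (u - c * s) ^ 2 := by
  refine ⟨-B / (2 * A), by apply div_pos <;> linarith, fun u s => ?_⟩
  rw [quadratic_form_eq_mul_of_discrim_eq_sq hA.ne' (δ := 0) (by simpa using hd)]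
  simp only [add_zero, sub_zero]
  ring

theorem exists_quadratic_form_eq_mul (hA : 0 < A) (hB : B < 0) (hC : 0 < C)
    (hd : 0 < discrim A B C) :
    ∃ c₁, 0 < c₁ ∧ ∃ c₂, 0 < c₂ ∧ c₁ ≠ c₂ ∧ ∀ u s : ℝ,
      A * u ^ 2 + B * u * s + C * s ^ 2 = A * (u - c₁ * s) * (u - c₂ * s) := by
  set δ := √(discrim A B C)
  have hδ : discrim A B C = δ * δ := (Real.mul_self_sqrt hd.le).symm
  have hδpos : 0 < δ := Real.sqrt_pos.mpr hd
  have hδB : δ < -B := by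
    rw [discrim] at hδ
    nlinarith [mul_pos hA hC]
  refine ⟨(-B + δ) / (2 * A), by apply div_pos <;> linarith,
    (-B - δ) / (2 * A), by apply div_pos <;> linarith, ?_,
    quadratic_form_eq_mul_of_discrim_eq_sq hA.ne' hδ⟩
  intro h
  rw [div_left_inj' (by positivity)] at h
  linarith

end QuadraticForm

section Coefficients

variable {β : ℝ}

/-- The second root `C'_β` of `a² ↦ discrim (2(β+1)) (3(β+2) − 2a²) ((β+2)a²)`. -/
def CbetaConj (β : ℝ) : ℝ := ((β + 2) / 2) * (2 * β + 5 - √((2 * β + 5) ^ 2 - 9))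

theorem discrim_fQuartic_coeffs (hβ : -1 < β) (a : ℝ) :
    discrim (2 * (β + 1)) (3 * (β + 2) - 2 * a ^ 2) ((β + 2) * a ^ 2)
      = 4 * (a ^ 2 - Cbeta β) * (a ^ 2 - CbetaConj β) := by
  have hS : √((2 * β + 5) ^ 2 - 9) ^ 2 = (2 * β + 5) ^ 2 - 9 := Real.sq_sqrt (by nlinarith)
  rw [discrim, Cbeta, CbetaConj]
  linear_combination (β + 2) ^ 2 * hS

theorem three_mul_lt_two_mul_Cbeta (hβ : -1 < β) : 3 * (β + 2) < 2 * Cbeta β := by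
  have := Real.sqrt_nonneg ((2 * β + 5) ^ 2 - 9)
  rw [Cbeta]
  nlinarith

theorem two_mul_CbetaConj_lt_three_mul (hβ : -1 < β) : 2 * CbetaConj β < 3 * (β + 2) := by
  have hS : 2 * β + 2 < √((2 * β + 5) ^ 2 - 9) :=
    Real.lt_sqrt_of_sq_lt (by nlinarith)
  rw [CbetaConj]
  nlinarith

theorem fQuartic_eq_quadratic_form (m : ℕ) (a β : ℝ) (x : Fin m → ℝ) (t : ℝ) :
    fQuartic m a β x t
      = 2 * (β + 1) * ((∑ i, x i ^ 2) ^ 2) ^ 2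
        + (3 * (β + 2) - 2 * a ^ 2) * (∑ i, x i ^ 2) ^ 2 * t ^ 2
        + (β + 2) * a ^ 2 * (t ^ 2) ^ 2 := by
  rw [fQuartic]; ring

end Coefficients

theorem sum_sq_ne_zero {m : ℕ} {x : Fin m → ℝ} (hx : x ≠ 0) : ∑ i, x i ^ 2 ≠ 0 := by
  simp only [sq]
  rw [Ne, Finset.sum_mul_self_eq_zero_iff]
  exact fun h => hx (funext fun i => h i (Finset.mem_univ i))

theorem fQuartic_factorization_case1_general (m : ℕ) (a β : ℝ) (ha : a ≠ 0)
    (hβ : β ∈ Set.Ioo (-1 : ℝ) 0 ∪ Set.Ioi (0 : ℝ)) :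
    (a ^ 2 < Cbeta β →
      ∀ (x : Fin m → ℝ) (t : ℝ), (x ≠ 0 ∨ t ≠ 0) → 0 < fQuartic m a β x t) ∧
    (a ^ 2 = Cbeta β →
      ∃ γ : ℝ, 0 < γ ∧ ∃ c : ℝ, 0 < c ∧ ∀ (x : Fin m → ℝ) (t : ℝ),
        fQuartic m a β x t = γ * ((∑ i, x i ^ 2) ^ 2 - c * t ^ 2) ^ 2) ∧
    (Cbeta β < a ^ 2 →
      ∃ γ : ℝ, 0 < γ ∧ ∃ c₁ : ℝ, 0 < c₁ ∧ ∃ c₂ : ℝ, 0 < c₂ ∧ c₁ ≠ c₂ ∧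
        ∀ (x : Fin m → ℝ) (t : ℝ),
          fQuartic m a β x t
            = γ * ((∑ i, x i ^ 2) ^ 2 - c₁ * t ^ 2)
                * ((∑ i, x i ^ 2) ^ 2 - c₂ * t ^ 2)) := by
  have hβ1 : -1 < β := hβ.elim (·.1) fun h => lt_trans (by norm_num) h
  have hA : 0 < 2 * (β + 1) := by linarith
  have hC : 0 < (β + 2) * a ^ 2 := mul_pos (by linarith) (by positivity)
  have hd := discrim_fQuartic_coeffs hβ1 a
  have hB := three_mul_lt_two_mul_Cbeta hβ1
  have hB' := two_mul_CbetaConj_lt_three_mul hβ1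
  simp only [fQuartic_eq_quadratic_form]
  refine ⟨fun hlt x t hxt => ?_, fun heq => ?_, fun hgt => ?_⟩
  · have hxt' : (∑ i, x i ^ 2) ^ 2 ≠ 0 ∨ t ^ 2 ≠ 0 :=
      hxt.imp (fun hx => pow_ne_zero 2 (sum_sq_ne_zero hx)) (pow_ne_zero 2)
    rcases le_or_gt 0 (3 * (β + 2) - 2 * a ^ 2) with hB0 | hB0
    · exact quadratic_form_pos_of_coeff_nonneg hA hB0 hC (by positivity) (by positivity) hxt'
    · refine quadratic_form_pos_of_discrim_neg hA ?_ hxt'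
      rw [hd]
      nlinarith
  · obtain ⟨c, hc, hf⟩ := exists_quadratic_form_eq_sq hA (B := 3 * (β + 2) - 2 * a ^ 2) (by linarith)
      (by rw [hd, heq]; ring)
    exact ⟨_, hA, c, hc, fun x t => hf _ _⟩
  · obtain ⟨c₁, hc₁, c₂, hc₂, hne, hf⟩ :=
      exists_quadratic_form_eq_mul hA (B := 3 * (β + 2) - 2 * a ^ 2) (by linarith) hC
        (by rw [hd]; nlinarith)
    exact ⟨_, hA, c₁, hc₁, c₂, hc₂, hne, fun x t => hf _ _⟩

/-- Lemma 3.6, Case 1: for `β ∈ (−1,0) ∪ (0,∞)` and `a ≠ 0`: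
(i) if `a² < C_β` then `f > 0` away from the origin;
(ii) if `a² = C_β` then `f(x,t) = γ(|x|⁴ − ct²)²` with `γ, c > 0`;
(iii) if `a² > C_β` then `f(x,t) = γ(|x|⁴ − c₁t²)(|x|⁴ − c₂t²)` with `γ > 0`,
`c₁, c₂ > 0`, `c₁ ≠ c₂`. -/
theorem fQuartic_factorization_case1 (m : ℕ) (hm : 1 ≤ m) (a β : ℝ) (ha : a ≠ 0)
    (hβ : β ∈ Set.Ioo (-1 : ℝ) 0 ∪ Set.Ioi (0 : ℝ)) :
    (a ^ 2 < Cbeta β →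
      ∀ (x : Fin m → ℝ) (t : ℝ), (x ≠ 0 ∨ t ≠ 0) → 0 < fQuartic m a β x t) ∧
    (a ^ 2 = Cbeta β →
      ∃ γ : ℝ, 0 < γ ∧ ∃ c : ℝ, 0 < c ∧ ∀ (x : Fin m → ℝ) (t : ℝ),
        fQuartic m a β x t = γ * ((∑ i, x i ^ 2) ^ 2 - c * t ^ 2) ^ 2) ∧
    (Cbeta β < a ^ 2 →
      ∃ γ : ℝ, 0 < γ ∧ ∃ c₁ : ℝ, 0 < c₁ ∧ ∃ c₂ : ℝ, 0 < c₂ ∧ c₁ ≠ c₂ ∧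
        ∀ (x : Fin m → ℝ) (t : ℝ),
          fQuartic m a β x t
            = γ * ((∑ i, x i ^ 2) ^ 2 - c₁ * t ^ 2)
                * ((∑ i, x i ^ 2) ^ 2 - c₂ * t ^ 2)) :=
  fQuartic_factorization_case1_general m a β ha hβ
end
end
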